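/- arXiv:2510.00270 — 4 statements merged into one kernel-verified Lean document; each statement's English description precedes it below -/
import Mathlib

section
/- If a differentiable function ∇ of the form g(Ax), with g : ℝ^m → ℝ μ-strongly convex and A : ℝ^n → ℝ^m linear, is considered, then the composite h(x) = g(Ax) satisfies the Polyak–Łojasiewicz inequality (1/2)‖∇h(x)‖² ≥ μ·σ₂(A)²·(h(x) − h*), where h* = inf h and σ₂(A) is the smallest nonzero singular value of A. -/
open scoped RealInnerProductSpace

noncomputable section

abbrev Stalk (n : ℕ) : Type := EuclideanSpace ℝ (Fin n)

abbrev C0 {V : Type} [Fintype V] (nv : V → ℕ) : Type :=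
  PiLp 2 (fun v : V => Stalk (nv v))

abbrev C1 {E : Type} [Fintype E] (ne : E → ℕ) : Type :=
  PiLp 2 (fun e : E => Stalk (ne e))

/-- The coboundary operator of a cellular sheaf over a graph with edge set `E`,
oriented with endpoint maps `src` and `tgt`, vertex stalks `Stalk (nv v)`,
edge stalks `Stalk (ne e)` and restriction maps `r v e`. -/
def coboundary {V E : Type} [Fintype V] [Fintype E] (nv : V → ℕ) (ne : E → ℕ)
    (src tgt : E → V)
    (r : (v : V) → (e : E) → (Stalk (nv v) →ₗ[ℝ] Stalk (ne e))) :
    C0 nv →ₗ[ℝ] C1 ne :=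
  (WithLp.linearEquiv 2 ℝ (∀ e : E, Stalk (ne e))).symm.toLinearMap ∘ₗ
    (LinearMap.pi fun e : E =>
      r (src e) e ∘ₗ LinearMap.proj (src e) - r (tgt e) e ∘ₗ LinearMap.proj (tgt e)) ∘ₗ
    (WithLp.linearEquiv 2 ℝ (∀ v : V, Stalk (nv v))).toLinearMap

/-!
Put `d = x - x₀` and `w = ∇g(Ax)`. Strong convexity of `g` gives
`h(x) - h(x₀) ≤ ⟪w, A d⟫ - (μ/2)‖A d‖²`. Replacing `d` by its orthogonal projection onto
`(ker A)ᗮ` changes neither `A d` nor `⟪w, A d⟫ = ⟪Aᵀw, d⟫`, and on `(ker A)ᗮ` the smallest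
nonzero eigenvalue `λ` of `AᵀA` satisfies `λ‖d‖² ≤ ‖A d‖²`. Hence
`h(x) - h(x₀) ≤ ‖∇h(x)‖ r - (μλ/2) r²` with `r = ‖d‖`, and maximizing over `r` gives the bound.
-/

theorem mul_le_sq_div_two_of_le_mul_sub_mul_sq {a b c r : ℝ} (hc : 0 ≤ c)
    (h : a ≤ b * r - c / 2 * r ^ 2) : c * a ≤ b ^ 2 / 2 := by
  nlinarith [sq_nonneg (b - c * r), mul_le_mul_of_nonneg_left h hc]

section FirstOrder

variable {E : Type*} [NormedAddCommGroup E] {s : Set E} {f : E → ℝ} {x y : E}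

theorem ConvexOn.add_fderiv_sub_le [NormedSpace ℝ E] {f' : E →L[ℝ] ℝ} (hf : ConvexOn ℝ s f)
    (hx : x ∈ s) (hy : y ∈ s) (hd : HasFDerivAt f f' x) : f x + f' (y - x) ≤ f y := by
  let ℓ : ℝ →ᵃ[ℝ] E := AffineMap.lineMap x y
  have hdℓ : HasDerivAt (f ∘ ℓ) (f' (y - x)) 0 :=
    (by simpa [ℓ] using hd : HasFDerivAt f f' (ℓ 0)).comp_hasDerivAt 0 AffineMap.hasDerivAt_lineMap
  have hslope := (hf.comp_affineMap ℓ).le_slope_of_hasDerivAt (x := 0) (y := 1)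
    (by simpa [ℓ] using hx) (by simpa [ℓ] using hy) one_pos hdℓ
  simp only [slope, Function.comp, ℓ, AffineMap.lineMap_apply_zero, AffineMap.lineMap_apply_one,
    sub_zero, inv_one, vsub_eq_sub, one_smul] at hslope
  linarith

theorem StrongConvexOn.add_inner_add_le_of_hasGradientAt [InnerProductSpace ℝ E] [CompleteSpace E]
    {m : ℝ} {f' : E} (hf : StrongConvexOn s m f) (hx : x ∈ s) (hy : y ∈ s)
    (hd : HasGradientAt f f' x) : f x + ⟪f', y - x⟫ + m / 2 * ‖y - x‖ ^ 2 ≤ f y := by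
  have hd' : HasFDerivAt (fun z => f z - m / 2 * ‖z‖ ^ 2)
      (InnerProductSpace.toDual ℝ E f' - (m / 2) • (2 • innerSL ℝ x)) x :=
    hd.hasFDerivAt.sub ((hasStrictFDerivAt_norm_sq x).hasFDerivAt.const_smul (m / 2))
  have key := (strongConvexOn_iff_convex.mp hf).add_fderiv_sub_le hx hy hd'
  have hnorm : ‖y - x‖ ^ 2 = ‖y‖ ^ 2 - ‖x‖ ^ 2 - 2 * ⟪x, y - x⟫ := by
    rw [norm_sub_sq_real, inner_sub_right, real_inner_self_eq_norm_sq, real_inner_comm]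
    ring
  simp only [sub_apply, InnerProductSpace.toDual_apply_apply,
    smul_apply, coe_innerSL_apply, nsmul_eq_mul, Nat.cast_ofNat,
    smul_eq_mul] at key
  rw [hnorm]
  linarith

end FirstOrder

theorem HasGradientAt.comp_continuousLinearMap {𝕜 E F : Type*} [RCLike 𝕜]
    [NormedAddCommGroup E] [InnerProductSpace 𝕜 E] [CompleteSpace E]
    [NormedAddCommGroup F] [InnerProductSpace 𝕜 F] [CompleteSpace F]
    {g : F → 𝕜} {g' : F} (A : E →L[𝕜] F) {x : E} (hg : HasGradientAt g g' (A x)) :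
    HasGradientAt (fun z => g (A z)) (ContinuousLinearMap.adjoint A g') x := by
  rw [hasGradientAt_iff_hasFDerivAt] at hg ⊢
  refine (hg.comp x A.hasFDerivAt).congr_fderiv ?_
  ext v
  simp [ContinuousLinearMap.adjoint_inner_left]

namespace LinearMap

variable {E F : Type*} [NormedAddCommGroup E] [InnerProductSpace ℝ E] [FiniteDimensional ℝ E]
  [NormedAddCommGroup F] [InnerProductSpace ℝ F]

theorem apply_starProjection_orthogonal_ker (A : E →ₗ[ℝ] F) (v : E) :
    A ((ker A)ᗮ.starProjection v) = A v := by
  rw [Submodule.starProjection_orthogonal_val, map_sub,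
    mem_ker.mp ((ker A).starProjection_apply_mem v), sub_zero]

variable [FiniteDimensional ℝ F]

theorem IsSymmetric.mul_norm_sq_le_inner_of_mem_orthogonal_ker {T : E →ₗ[ℝ] E}
    (hT : T.IsSymmetric) {c : ℝ} (hc : ∀ t ≠ 0, Module.End.HasEigenvalue T t → c ≤ t) {v : E}
    (hv : v ∈ (ker T)ᗮ) : c * ‖v‖ ^ 2 ≤ ⟪v, T v⟫ := by
  set b := hT.eigenvectorBasis rfl
  set e := hT.eigenvalues rfl
  have hTb : ∀ i, T (b i) = e i • b i := hT.apply_eigenvectorBasis rfl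
  have hTv : ∀ i, ⟪b i, T v⟫ = e i * ⟪b i, v⟫ := fun i => by
    rw [← hT, hTb, real_inner_smul_left]
  rw [← real_inner_self_eq_norm_sq, ← b.sum_inner_mul_inner, ← b.sum_inner_mul_inner, Finset.mul_sum]
  refine Finset.sum_le_sum fun i _ => ?_
  rw [hTv, ← real_inner_comm v]
  rcases eq_or_ne (e i) 0 with he | he
  · have hbi : b i ∈ ker T := by
      rw [mem_ker, hTb, he, zero_smul]
    simp [Submodule.inner_right_of_mem_orthogonal hbi hv]
  · nlinarith [hc _ he (hT.hasEigenvalue_eigenvalues rfl i), mul_self_nonneg ⟪b i, v⟫]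

theorem mul_norm_sq_le_norm_apply_sq_of_mem_orthogonal_ker (A : E →ₗ[ℝ] F) {c : ℝ}
    (hc : ∀ t ≠ 0, Module.End.HasEigenvalue (A.adjoint ∘ₗ A) t → c ≤ t) {v : E}
    (hv : v ∈ (ker A)ᗮ) : c * ‖v‖ ^ 2 ≤ ‖A v‖ ^ 2 := by
  rw [← ker_adjoint_comp_self] at hv
  have := A.isSymmetric_adjoint_comp_self.mul_norm_sq_le_inner_of_mem_orthogonal_ker hc hv
  rwa [comp_apply, adjoint_inner_right, real_inner_self_eq_norm_sq] at this

end LinearMap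

/-- If `g` is `μ`-strongly convex and differentiable and `A` is linear, then the composite
`h = g ∘ A` satisfies the Polyak–Łojasiewicz inequality
`(1/2)‖∇h(x)‖² ≥ μ·σ₂(A)²·(h(x) − h*)`, where `σ₂(A)` is the smallest nonzero singular
value of `A` (the square root of the smallest nonzero eigenvalue of `AᵀA`). -/
theorem pl_of_strongly_convex_comp_linear {n m : ℕ}
    (g : EuclideanSpace ℝ (Fin m) → ℝ)
    (A : EuclideanSpace ℝ (Fin n) →ₗ[ℝ] EuclideanSpace ℝ (Fin m))
    (μ : ℝ) (hμ : 0 < μ)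
    (hgdiff : Differentiable ℝ g)
    (hg : StrongConvexOn Set.univ μ g)
    (hstar : ℝ)
    (hmin : ∃ x0 : EuclideanSpace ℝ (Fin n),
      (∀ x, g (A x0) ≤ g (A x)) ∧ g (A x0) = hstar) :
    ∀ x : EuclideanSpace ℝ (Fin n),
      μ * (Real.sqrt (sInf {t : ℝ | t ≠ 0 ∧ Module.End.HasEigenvalue
            (LinearMap.adjoint A ∘ₗ A : Module.End ℝ (EuclideanSpace ℝ (Fin n))) t})) ^ 2
          * (g (A x) - hstar)
        ≤ (1 / 2) * ‖gradient (fun z => g (A z)) x‖ ^ 2 := by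
  intro x
  obtain ⟨x0, -, rfl⟩ := hmin
  set S := {t : ℝ | t ≠ 0 ∧ Module.End.HasEigenvalue (LinearMap.adjoint A ∘ₗ A) t}
  have hS : ∀ t ∈ S, 0 ≤ t := fun t ht =>
    eigenvalue_nonneg_of_nonneg ht.2 A.isPositive_adjoint_comp_self.re_inner_nonneg_right
  have hlow : ∀ t ≠ 0, Module.End.HasEigenvalue (LinearMap.adjoint A ∘ₗ A) t → sInf S ≤ t :=
    fun t ht hte => csInf_le ⟨0, hS⟩ ⟨ht, hte⟩
  set w := gradient g (A x)
  have hgrad : gradient (fun z => g (A z)) x = LinearMap.adjoint A w := by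
    rw [LinearMap.adjoint_eq_toCLM_adjoint]
    exact ((hgdiff (A x)).hasGradientAt.comp_continuousLinearMap A.toContinuousLinearMap).gradient
  rw [Real.sq_sqrt (Real.sInf_nonneg hS), hgrad]
  set d := (LinearMap.ker A)ᗮ.starProjection (x - x0)
  have hAd : A d = A x - A x0 := by rw [A.apply_starProjection_orthogonal_ker, map_sub]
  have hgap : sInf S * ‖d‖ ^ 2 ≤ ‖A d‖ ^ 2 :=
    A.mul_norm_sq_le_norm_apply_sq_of_mem_orthogonal_ker hlow (Submodule.starProjection_apply_mem _ _)
  have hinner : ⟪w, A d⟫ ≤ ‖LinearMap.adjoint A w‖ * ‖d‖ := by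
    rw [← LinearMap.adjoint_inner_left]
    exact real_inner_le_norm _ _
  have hsc := hg.add_inner_add_le_of_hasGradientAt (Set.mem_univ (A x)) (Set.mem_univ (A x0))
    (hgdiff (A x)).hasGradientAt
  rw [← neg_sub, ← hAd, inner_neg_right, norm_neg] at hsc
  have hquad : g (A x) - g (A x0) ≤
      ‖LinearMap.adjoint A w‖ * ‖d‖ - μ * sInf S / 2 * ‖d‖ ^ 2 := by
    linarith [mul_le_mul_of_nonneg_left hgap hμ.le]
  linarith [mul_le_sq_div_two_of_le_mul_sub_mul_sq (mul_nonneg hμ.le (Real.sInf_nonneg hS)) hquad]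
end
end

section
/- If a differentiable convex function h : ℝ^n → ℝ with nonempty minimizer set X* satisfies the Polyak–Łojasiewicz inequality with constant μ > 0, then it satisfies the error bound: dist(x, X*) ≤ (1/μ)‖∇h(x)‖ for all x, where dist denotes Euclidean distance to X*. -/
open scoped RealInnerProductSpace

noncomputable section

open Filter

set_option linter.unusedVariables false

lemma slope_le_of_penalized_min' {n : ℕ} (h : EuclideanSpace ℝ (Fin n) → ℝ) (hstar : ℝ)
    (hdiff : Differentiable ℝ h) (y : EuclideanSpace ℝ (Fin n)) (hy : hstar < h y)
    (ε : ℝ)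
    (hmin : ∀ z, Real.sqrt (h y - hstar) - ε * dist z y ≤ Real.sqrt (h z - hstar))
    (hw : gradient h y ≠ 0) :
    ‖gradient h y‖ / (2 * Real.sqrt (h y - hstar)) ≤ ε := by
  set w := gradient h y with hwdef
  have hwn : (0:ℝ) < ‖w‖ := norm_pos_iff.mpr hw
  set v : EuclideanSpace ℝ (Fin n) := ‖w‖⁻¹ • w with hvdef
  have hvnorm : ‖v‖ = 1 := by
    rw [hvdef, norm_smul, norm_inv, norm_norm, inv_mul_cancel₀ hwn.ne']
  set s := Real.sqrt (h y - hstar) with hsdef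
  have hspos : (0:ℝ) < s := Real.sqrt_pos.mpr (by linarith)
  -- the curve t ↦ y + t • (-v)
  have hc : HasDerivAt (fun t : ℝ => y + t • (-v)) (-v) 0 := by
    simpa using ((hasDerivAt_id (0:ℝ)).smul_const (-v)).const_add y
  have hgrad : HasGradientAt h w y := (hdiff y).hasGradientAt
  have hgrad' : HasFDerivAt h ((InnerProductSpace.toDual ℝ (EuclideanSpace ℝ (Fin n))) w)
      ((fun t : ℝ => y + t • (-v)) 0) := by
    simpa using hgrad.hasFDerivAt
  have hφ : HasDerivAt (fun t : ℝ => h (y + t • (-v))) (-‖w‖) 0 := by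
    have h2 := hgrad'.comp_hasDerivAt 0 hc
    have h3 : (InnerProductSpace.toDual ℝ (EuclideanSpace ℝ (Fin n))) w (-v) = -‖w‖ := by
      rw [InnerProductSpace.toDual_apply_apply, inner_neg_right, hvdef, real_inner_smul_right,
        real_inner_self_eq_norm_sq]
      field_simp
    rw [h3] at h2
    exact h2
  have hψ : HasDerivAt (fun t : ℝ => Real.sqrt (h (y + t • (-v)) - hstar))
      (-‖w‖ / (2 * s)) 0 := by
    have h4 := (hφ.sub_const hstar).sqrt (by simp; linarith)
    simpa using h4
  -- slope bound from minimality
  have hsl : Tendsto (slope (fun t : ℝ => Real.sqrt (h (y + t • (-v)) - hstar)) 0)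
      (nhdsWithin 0 (Set.Ioi 0)) (nhds (-‖w‖ / (2 * s))) := by
    exact (hasDerivAt_iff_tendsto_slope.mp hψ).mono_left
      (nhdsWithin_mono _ (fun t ht => by simpa using (ne_of_gt ht)))
  have hbound : ∀ᶠ t in nhdsWithin (0:ℝ) (Set.Ioi 0),
      -ε ≤ slope (fun t : ℝ => Real.sqrt (h (y + t • (-v)) - hstar)) 0 t := by
    filter_upwards [self_mem_nhdsWithin] with t ht
    have ht' : (0:ℝ) < t := ht
    have hd : dist (y + t • (-v)) y = t := by
      rw [dist_eq_norm]
      simp [norm_smul, hvnorm, abs_of_pos ht']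
    have := hmin (y + t • (-v))
    rw [hd] at this
    have h0 : (fun t : ℝ => Real.sqrt (h (y + t • (-v)) - hstar)) 0 = s := by
      simp [hsdef]
    rw [slope_def_field, sub_zero, le_div_iff₀ ht']
    simp only [zero_smul, add_zero, ← hsdef]
    linarith
  have hfin : -ε ≤ -‖w‖ / (2 * s) := ge_of_tendsto hsl hbound
  rw [neg_div] at hfin
  linarith

/-- A differentiable convex function with nonempty minimizer set satisfying the
Polyak–Łojasiewicz inequality with constant `μ > 0` satisfies the global error bound
`dist(x, X*) ≤ (1/μ)‖∇h(x)‖`. -/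
theorem error_bound_of_pl {n : ℕ}
    (h : EuclideanSpace ℝ (Fin n) → ℝ) (μ : ℝ) (hμ : 0 < μ)
    (hdiff : Differentiable ℝ h)
    (hconv : ConvexOn ℝ Set.univ h)
    (Xstar : Set (EuclideanSpace ℝ (Fin n)))
    (hXstar : Xstar = {x | IsMinOn h Set.univ x})
    (hne : Xstar.Nonempty)
    (hstar : ℝ) (hhstar : ∀ x ∈ Xstar, h x = hstar)
    (hPL : ∀ x, μ * (h x - hstar) ≤ (1 / 2) * ‖gradient h x‖ ^ 2) :
    ∀ x, Metric.infDist x Xstar ≤ (1 / μ) * ‖gradient h x‖ := by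
  obtain ⟨x₀, hx₀⟩ := hne
  have hmem : IsMinOn h Set.univ x₀ := by rw [hXstar] at hx₀; exact hx₀
  have hlow : ∀ z, hstar ≤ h z := fun z => by
    have := isMinOn_iff.mp hmem z (Set.mem_univ z)
    rw [hhstar x₀ hx₀] at this; exact this
  have hXmem : ∀ z, h z = hstar → z ∈ Xstar := fun z hz => by
    rw [hXstar]
    exact isMinOn_iff.mpr fun w _ => by rw [hz]; exact hlow w
  set g : EuclideanSpace ℝ (Fin n) → ℝ := fun z => Real.sqrt (h z - hstar) with hgdef
  have hgc : Continuous g :=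
    Real.continuous_sqrt.comp (hdiff.continuous.sub continuous_const)
  set c : ℝ := Real.sqrt (μ / 2) with hcdef
  have hc : (0:ℝ) < c := Real.sqrt_pos.mpr (by linarith)
  have hc2 : c ^ 2 = μ / 2 := Real.sq_sqrt (by linarith)
  intro x
  -- main step: infDist x Xstar ≤ g x / ε for all 0 < ε < c
  have key : ∀ ε : ℝ, 0 < ε → ε < c → Metric.infDist x Xstar ≤ g x / ε := by
    intro ε hε hεc
    -- minimize the coercive penalized function
    have hcoer : Tendsto (fun z => g z + ε * dist z x) (cocompact _) atTop := by
      apply tendsto_atTop_mono (fun z => le_add_of_nonneg_left (Real.sqrt_nonneg _))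
      exact (tendsto_dist_right_cocompact_atTop x).const_mul_atTop hε
    have hFc : Continuous (fun z => g z + ε * dist z x) :=
      hgc.add (continuous_const.mul (continuous_id.dist continuous_const))
    obtain ⟨y, hymin⟩ := hFc.exists_forall_le hcoer
    have hy1 : ε * dist y x ≤ g x := by
      have := hymin x
      have hgy : 0 ≤ g y := Real.sqrt_nonneg _
      simp only [dist_self, mul_zero, add_zero] at this
      linarith
    have hy2 : ∀ z, g y - ε * dist z y ≤ g z := by
      intro z
      have h1 := hymin z
      have h2 : dist z x ≤ dist z y + dist y x := dist_triangle z y x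
      nlinarith [hε]
    -- the minimizer is a global minimizer of h
    have hyX : y ∈ Xstar := by
      apply hXmem
      by_contra hcon
      have hy' : hstar < h y := lt_of_le_of_ne (hlow y) (Ne.symm hcon)
      have hwne : gradient h y ≠ 0 := by
        intro h0
        have := hPL y
        rw [h0] at this
        simp at this
        nlinarith
      have hsle := slope_le_of_penalized_min' h hstar hdiff y hy' ε hy2 hwne
      -- but PL gives slope ≥ c
      have hs : (0:ℝ) < Real.sqrt (h y - hstar) := Real.sqrt_pos.mpr (by linarith)
      have hsq : Real.sqrt (h y - hstar) ^ 2 = h y - hstar := Real.sq_sqrt (by linarith)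
      have hPLy := hPL y
      have hge : c ≤ ‖gradient h y‖ / (2 * Real.sqrt (h y - hstar)) := by
        rw [le_div_iff₀ (by positivity)]
        nlinarith [norm_nonneg (gradient h y), sq_nonneg (‖gradient h y‖ - c * (2 * Real.sqrt (h y - hstar)))]
      linarith
    calc Metric.infDist x Xstar ≤ dist x y := Metric.infDist_le_dist_of_mem hyX
      _ = dist y x := dist_comm x y
      _ ≤ g x / ε := by rw [le_div_iff₀ hε]; linarith
  -- pass to the limit ε → c
  have hDc : Metric.infDist x Xstar * c ≤ g x := by
    by_contra hcon
    push_neg at hcon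
    set D := Metric.infDist x Xstar with hDdef
    have hgx : 0 ≤ g x := Real.sqrt_nonneg _
    have hD : 0 < D := by nlinarith
    have hlt : g x / D < c := by rw [div_lt_iff₀ hD]; nlinarith
    set ε := (g x / D + c) / 2 with hεdef
    have hε1 : 0 < ε := by positivity
    have hε2 : ε < c := by rw [hεdef]; linarith
    have hε3 : g x / D < ε := by rw [hεdef]; linarith
    have := key ε hε1 hε2
    rw [le_div_iff₀ hε1] at this
    rw [div_lt_iff₀ hD] at hε3
    nlinarith
  -- combine with PL at x
  have hPLx := hPL x
  have hsqx : g x ^ 2 = h x - hstar := Real.sq_sqrt (by linarith [hlow x])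
  have hgx : 0 ≤ g x := Real.sqrt_nonneg _
  have hDpos : 0 ≤ Metric.infDist x Xstar := Metric.infDist_nonneg
  have hkey : μ * Metric.infDist x Xstar ≤ ‖gradient h x‖ := by
    have h1 : 2 * c * g x ≤ ‖gradient h x‖ := by
      nlinarith [norm_nonneg (gradient h x), sq_nonneg (‖gradient h x‖ - 2 * c * g x)]
    nlinarith
  rw [one_div, ← div_eq_inv_mul, le_div_iff₀ hμ]
  linarith
end
end

section
/- The minimizer set of the Dirichlet energy with strongly convex differentiable edge potentials minimized at 0 is the linear subspace ker δ_F of C^0(G;F); consequently, for any x ∈ C^0(G;F), the nearest minimizer to x is given by the orthogonal projection of x onto ker δ_F. -/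
/-! A strictly convex potential has at most one minimizer, so a sum of edge potentials minimized
at `0` is minimal exactly at the zero cochain. Since `δ 0 = 0`, a vertex cochain `x` minimizes the
energy `Σₑ Uₑ ((δ x)ₑ)` iff `δ x` minimizes the edge sum, i.e. iff `δ x = 0`. The minimizer set is
therefore the closed subspace `ker δ`, and the nearest point of a subspace is the orthogonal
projection onto it. -/

open scoped RealInnerProductSpace

noncomputable section

open Set

lemma StrictConvexOn.eq_of_le_of_isMinOn {E : Type*} [AddCommMonoid E] [Module ℝ E]
    {f : E → ℝ} {a x : E} (hf : StrictConvexOn ℝ univ f) (ha : IsMinOn f univ a)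
    (hx : f x ≤ f a) : x = a :=
  hf.eq_of_isMinOn (fun y _ => hx.trans (ha (mem_univ y))) ha (mem_univ x) (mem_univ a)

lemma eq_zero_of_sum_le_sum_zero {ι : Type*} [Fintype ι] {F : ι → Type*}
    [∀ i, AddCommMonoid (F i)] [∀ i, Module ℝ (F i)] {U : ∀ i, F i → ℝ}
    (hU : ∀ i, StrictConvexOn ℝ univ (U i)) (h0 : ∀ i, IsMinOn (U i) univ 0)
    {w : ∀ i, F i} (hw : ∑ i, U i (w i) ≤ ∑ i, U i 0) : w = 0 := by
  have hle : ∀ i ∈ Finset.univ, U i 0 ≤ U i (w i) := fun i _ => h0 i (mem_univ _)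
  have heq := (Finset.sum_eq_sum_iff_of_le hle).mp (le_antisymm (Finset.sum_le_sum hle) hw)
  funext i
  exact (hU i).eq_of_le_of_isMinOn (h0 i) (heq i (Finset.mem_univ i)).ge

lemma LinearMap.setOf_isMinOn_comp_eq_ker {R M N β : Type*} [Semiring R] [AddCommMonoid M]
    [AddCommMonoid N] [Module R M] [Module R N] [Preorder β] (L : M →ₗ[R] N) {Φ : N → β}
    (h0 : IsMinOn Φ univ 0) (huniq : ∀ w, Φ w ≤ Φ 0 → w = 0) :
    {x | IsMinOn (fun z => Φ (L z)) univ x} = (LinearMap.ker L : Set M) := by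
  ext x
  constructor
  · intro hx
    exact huniq _ (by simpa using hx (mem_univ 0))
  · intro (hx : L x = 0) z _
    simpa [hx] using h0 (mem_univ (L z))

lemma Submodule.norm_sub_orthogonalProjectionOnto_le {𝕜 E : Type*} [RCLike 𝕜]
    [NormedAddCommGroup E] [InnerProductSpace 𝕜 E] (K : Submodule 𝕜 E)
    [K.HasOrthogonalProjection] (x : E) {y : E} (hy : y ∈ K) :
    ‖x - (K.orthogonalProjectionOnto x : E)‖ ≤ ‖x - y‖ := by
  rw [← K.starProjection_apply, K.starProjection_minimal]
  exact ciInf_le ⟨0, fun _ ⟨_, h⟩ => h ▸ norm_nonneg _⟩ (⟨y, hy⟩ : K)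

theorem minimizer_set_eq_ker_and_nearest_is_projection_general
    {V E : Type} [Fintype V] [Fintype E] (nv : V → ℕ) (ne : E → ℕ)
    (src tgt : E → V)
    (r : (v : V) → (e : E) → (Stalk (nv v) →ₗ[ℝ] Stalk (ne e)))
    (Ue : (e : E) → Stalk (ne e) → ℝ) (me : E → ℝ)
    (hme : ∀ e, 0 < me e)
    (hsc : ∀ e, StrongConvexOn Set.univ (me e) (Ue e))
    (hmin0 : ∀ e (y : Stalk (ne e)), Ue e 0 ≤ Ue e y) :
    {x : C0 nv |
        IsMinOn (fun z : C0 nv => ∑ e : E, Ue e (coboundary nv ne src tgt r z e))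
          Set.univ x}
      = (LinearMap.ker (coboundary nv ne src tgt r) : Set (C0 nv)) ∧
    ∀ x : C0 nv, ∀ y ∈ LinearMap.ker (coboundary nv ne src tgt r),
      ‖x - (Submodule.orthogonalProjectionOnto (LinearMap.ker (coboundary nv ne src tgt r)) x : C0 nv)‖
        ≤ ‖x - y‖ := by
  set δ := coboundary nv ne src tgt r
  let Φ : C1 ne → ℝ := fun w => ∑ e, Ue e (w e)
  have hΦ0 : IsMinOn Φ univ 0 := fun w _ => Finset.sum_le_sum fun e _ => hmin0 e (w e)
  have hΦ_uniq (w : C1 ne) (hw : Φ w ≤ Φ 0) : w = 0 :=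
    (WithLp.ofLp_eq_zero 2).mp <| eq_zero_of_sum_le_sum_zero
      (fun e => (hsc e).strictConvexOn (hme e)) (fun e y _ => hmin0 e y) hw
  exact ⟨δ.setOf_isMinOn_comp_eq_ker hΦ0 hΦ_uniq,
    fun x _ => Submodule.norm_sub_orthogonalProjectionOnto_le _ x⟩

/-- With differentiable strongly convex edge potentials minimized at `0`, the minimizer
set of the Dirichlet energy is the linear subspace `ker δ`; consequently the nearest
minimizer to any `x` is the orthogonal projection of `x` onto `ker δ`. -/
theorem minimizer_set_eq_ker_and_nearest_is_projection
    {V E : Type} [Fintype V] [Fintype E] (nv : V → ℕ) (ne : E → ℕ)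
    (src tgt : E → V)
    (r : (v : V) → (e : E) → (Stalk (nv v) →ₗ[ℝ] Stalk (ne e)))
    (Ue : (e : E) → Stalk (ne e) → ℝ) (me : E → ℝ)
    (hme : ∀ e, 0 < me e)
    (hdiff : ∀ e, Differentiable ℝ (Ue e))
    (hsc : ∀ e, StrongConvexOn Set.univ (me e) (Ue e))
    (hmin0 : ∀ e (y : Stalk (ne e)), Ue e 0 ≤ Ue e y) :
    {x : C0 nv |
        IsMinOn (fun z : C0 nv => ∑ e : E, Ue e (coboundary nv ne src tgt r z e))
          Set.univ x}
      = (LinearMap.ker (coboundary nv ne src tgt r) : Set (C0 nv)) ∧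
    ∀ x : C0 nv, ∀ y ∈ LinearMap.ker (coboundary nv ne src tgt r),
      ‖x - (Submodule.orthogonalProjectionOnto (LinearMap.ker (coboundary nv ne src tgt r)) x : C0 nv)‖
        ≤ ‖x - y‖ :=
  minimizer_set_eq_ker_and_nearest_is_projection_general nv ne src tgt r Ue me hme hsc hmin0
end
end

section
/- Suppose f : ℝ^n → ℝ is differentiable with K-Lipschitz gradient, bounded below with minimizer set X* nonempty, and satisfies the error bound dist(x, X*) ≤ κ‖∇f(x)‖ for all x. Then gradient descent with step size 0 < γ < 1/K converges linearly: f(x(t)) − f* ≤ (1 − γc)^t (f(x(0)) − f*) for some constant c > 0 with γc < 1 depending only on K and κ. -/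
/-! Convexity gives `f x - f* ≤ ⟪∇f x, x - y⟫ ≤ ‖∇f x‖ ‖x - y‖` for every minimizer `y`, so the
error bound turns into the Polyak–Łojasiewicz inequality `f x - f* ≤ κ ‖∇f x‖²`. By the descent
lemma for a `K`-Lipschitz gradient, a step of size `γ` decreases `f` by at least
`γ (1 - γK/2) ‖∇f x‖² ≥ γ (1 - γK/2) / κ · (f x - f*)`, so the gap `f - f*` contracts by the
factor `1 - γc` with `c = (1 - γK/2) / κ`, capped at `1 / (2γ)` to keep `γc < 1`. -/

open Set Metric
open scoped Gradient RealInnerProductSpace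

theorem Metric.le_mul_infDist {α : Type*} [PseudoMetricSpace α] {s : Set α} {x : α} {a b : ℝ}
    (hs : s.Nonempty) (hb : 0 ≤ b) (h : ∀ y ∈ s, a ≤ b * dist x y) : a ≤ b * infDist x s := by
  have : Nonempty s := hs.to_subtype
  rw [infDist_eq_iInf, Real.mul_iInf_of_nonneg hb]
  exact le_ciInf fun y => h y y.2

section

variable {E : Type*} [NormedAddCommGroup E] [InnerProductSpace ℝ E] [CompleteSpace E]
  {f : E → ℝ}

theorem HasGradientAt.hasDerivAt_comp_add_smul {g x v : E} {t : ℝ}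
    (hf : HasGradientAt f g (x + t • v)) :
    HasDerivAt (fun s : ℝ => f (x + s • v)) ⟪g, v⟫ t := by
  have hline : HasDerivAt (fun s : ℝ => x + s • v) v t := by
    simpa using ((hasDerivAt_id t).smul_const v).const_add x
  have h : HasDerivAt (fun s : ℝ => f (x + s • v)) (InnerProductSpace.toDual ℝ E g v) t :=
    (hasGradientAt_iff_hasFDerivAt.mp hf).comp_hasDerivAt t hline
  simpa using h

theorem ConvexOn.add_inner_gradient_le (hconv : ConvexOn ℝ univ f) {x : E}
    (hf : DifferentiableAt ℝ f x) (y : E) : f x + ⟪∇ f x, y - x⟫ ≤ f y := by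
  have hline : ConvexOn ℝ univ (fun s : ℝ => f (x + s • (y - x))) := by
    simpa [Function.comp_def, AffineMap.lineMap_apply_module', add_comm]
      using hconv.comp_affineMap (AffineMap.lineMap x y)
  have hderiv := hline.le_slope_of_hasDerivAt (mem_univ 0) (mem_univ 1) zero_lt_one
    (HasGradientAt.hasDerivAt_comp_add_smul (t := 0) (by simpa using hf.hasGradientAt))
  simp only [slope_def_field, one_smul, zero_smul, add_zero, sub_zero, div_one,
    add_sub_cancel] at hderiv
  linarith

theorem le_add_inner_gradient_add_sq (hf : Differentiable ℝ f) {K : ℝ}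
    (hlip : ∀ x y, ‖∇ f x - ∇ f y‖ ≤ K * ‖x - y‖) (x y : E) :
    f y ≤ f x + ⟪∇ f x, y - x⟫ + K / 2 * ‖y - x‖ ^ 2 := by
  set v := y - x
  have hφ (s : ℝ) := (hf (x + s • v)).hasGradientAt.hasDerivAt_comp_add_smul
  have hB (s : ℝ) : HasDerivAt (fun s : ℝ => f x + s * ⟪∇ f x, v⟫ + K / 2 * s ^ 2 * ‖v‖ ^ 2)
      (⟪∇ f x, v⟫ + K * s * ‖v‖ ^ 2) s := by
    have h : HasDerivAt (fun s : ℝ => f x + s * ⟪∇ f x, v⟫ + K / 2 * s ^ 2 * ‖v‖ ^ 2) _ s :=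
      (((hasDerivAt_id s).mul_const _).const_add (f x)).add
        (((hasDerivAt_pow 2 s).const_mul (K / 2)).mul_const (‖v‖ ^ 2))
    convert h using 1
    simp only [Nat.cast_ofNat, Nat.add_one_sub_one, pow_one, one_mul]; ring
  have hbound (s : ℝ) (hs : s ∈ Ico (0 : ℝ) 1) :
      ⟪∇ f (x + s • v), v⟫ ≤ ⟪∇ f x, v⟫ + K * s * ‖v‖ ^ 2 := by
    calc ⟪∇ f (x + s • v), v⟫ = ⟪∇ f x, v⟫ + ⟪∇ f (x + s • v) - ∇ f x, v⟫ := by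
          rw [inner_sub_left]; ring
      _ ≤ ⟪∇ f x, v⟫ + K * ‖x + s • v - x‖ * ‖v‖ := by
          gcongr
          exact (real_inner_le_norm _ _).trans
            (mul_le_mul_of_nonneg_right (hlip _ _) (norm_nonneg v))
      _ = ⟪∇ f x, v⟫ + K * s * ‖v‖ ^ 2 := by
          rw [add_sub_cancel_left, norm_smul, Real.norm_of_nonneg hs.1]; ring
  have hfence := image_le_of_deriv_right_le_deriv_boundary
    (fun s _ => (hφ s).continuousAt.continuousWithinAt) (fun s _ => (hφ s).hasDerivWithinAt)
    (by simp) (fun s _ => (hB s).continuousAt.continuousWithinAt)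
    (fun s _ => (hB s).hasDerivWithinAt) hbound (right_mem_Icc.mpr zero_le_one)
  simpa [v] using hfence

theorem ConvexOn.sub_le_norm_gradient_mul_infDist (hconv : ConvexOn ℝ univ f) {x : E}
    (hf : DifferentiableAt ℝ f x) {s : Set E} (hs : s.Nonempty) {fstar : ℝ}
    (hfs : ∀ y ∈ s, f y = fstar) : f x - fstar ≤ ‖∇ f x‖ * infDist x s := by
  refine le_mul_infDist hs (norm_nonneg _) fun y hy => ?_
  have hlower := hconv.add_inner_gradient_le hf y
  have hinner := neg_le_of_abs_le (abs_real_inner_le_norm (∇ f x) (y - x))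
  rw [dist_comm, dist_eq_norm]
  linarith [hfs y hy]

theorem sub_smul_gradient_sub_le (hf : Differentiable ℝ f) {K : ℝ}
    (hlip : ∀ x y, ‖∇ f x - ∇ f y‖ ≤ K * ‖x - y‖) {κ fstar γ : ℝ} (hκ : 0 < κ) {x : E}
    (hPL : f x - fstar ≤ κ * ‖∇ f x‖ ^ 2) (hγ : 0 ≤ γ) (hγK : γ * K ≤ 2) :
    f (x - γ • ∇ f x) - fstar ≤ (1 - γ * ((1 - γ * K / 2) / κ)) * (f x - fstar) := by
  have hdesc := le_add_inner_gradient_add_sq hf hlip x (x - γ • ∇ f x)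
  rw [sub_sub_cancel_left, inner_neg_right, real_inner_smul_right, real_inner_self_eq_norm_sq,
    norm_neg, norm_smul, Real.norm_of_nonneg hγ] at hdesc
  have hrate : 0 ≤ γ * (1 - γ * K / 2) := mul_nonneg hγ (by linarith)
  calc f (x - γ • ∇ f x) - fstar ≤ f x - fstar - γ * (1 - γ * K / 2) * ‖∇ f x‖ ^ 2 := by
        linarith
    _ ≤ f x - fstar - γ * (1 - γ * K / 2) * ((f x - fstar) / κ) := by
        gcongr
        rwa [div_le_iff₀' hκ]
    _ = (1 - γ * ((1 - γ * K / 2) / κ)) * (f x - fstar) := by ring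

end

/-- Linear convergence of gradient descent: if `f` is differentiable with `K`-Lipschitz
gradient, convex, bounded below with nonempty minimizer set `X*`, and satisfies the error
bound `dist(x, X*) ≤ κ‖∇f(x)‖`, then gradient descent with step size `0 < γ < 1/K`
converges linearly: `f(x(t)) − f* ≤ (1 − γc)ᵗ (f(x(0)) − f*)` for some constant `c > 0`
with `γc < 1`. -/
theorem gradient_descent_linear_convergence {n : ℕ}
    (f : EuclideanSpace ℝ (Fin n) → ℝ) (K κ γ fstar : ℝ)
    (hK : 0 < K) (hκ : 0 < κ)
    (hdiff : Differentiable ℝ f)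
    (hlip : ∀ x y, ‖gradient f x - gradient f y‖ ≤ K * ‖x - y‖)
    (hconv : ConvexOn ℝ Set.univ f)
    (Xstar : Set (EuclideanSpace ℝ (Fin n)))
    (hXstar : Xstar = {x | IsMinOn f Set.univ x})
    (hne : Xstar.Nonempty)
    (hfstar : ∀ x ∈ Xstar, f x = fstar)
    (heb : ∀ x, Metric.infDist x Xstar ≤ κ * ‖gradient f x‖)
    (hγ0 : 0 < γ) (hγ : γ < 1 / K) :
    ∃ c : ℝ, 0 < c ∧ γ * c < 1 ∧
      ∀ x : ℕ → EuclideanSpace ℝ (Fin n),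
        (∀ t, x (t + 1) = x t - γ • gradient f (x t)) →
        ∀ t, f (x t) - fstar ≤ (1 - γ * c) ^ t * (f (x 0) - fstar) := by
  obtain ⟨xmin, hxmin⟩ := hne
  have hmin : IsMinOn f univ xmin := by rwa [hXstar] at hxmin
  have hfstar_le (z) : fstar ≤ f z := hfstar xmin hxmin ▸ hmin (mem_univ z)
  have hPL (z) : f z - fstar ≤ κ * ‖∇ f z‖ ^ 2 :=
    calc f z - fstar ≤ ‖∇ f z‖ * infDist z Xstar :=
          hconv.sub_le_norm_gradient_mul_infDist (hdiff z) ⟨xmin, hxmin⟩ hfstar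
      _ ≤ ‖∇ f z‖ * (κ * ‖∇ f z‖) := by gcongr; exact heb z
      _ = κ * ‖∇ f z‖ ^ 2 := by ring
  have hγK : γ * K < 1 := (lt_div_iff₀ hK).mp hγ
  set c := min ((1 - γ * K / 2) / κ) (1 / (2 * γ))
  have hγc : γ * c ≤ 1 / 2 := by
    calc γ * c ≤ γ * (1 / (2 * γ)) := by gcongr; exact min_le_right _ _
      _ = 1 / 2 := by field_simp
  refine ⟨c, lt_min (div_pos (by linarith) hκ) (by positivity), by linarith,
    fun x hx t => le_geom (u := fun t => f (x t) - fstar) (by linarith) t fun k _ => ?_⟩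
  calc f (x (k + 1)) - fstar ≤ (1 - γ * ((1 - γ * K / 2) / κ)) * (f (x k) - fstar) := by
        rw [hx k]; exact sub_smul_gradient_sub_le hdiff hlip hκ (hPL _) hγ0.le (by linarith)
    _ ≤ (1 - γ * c) * (f (x k) - fstar) := by
        gcongr
        · linarith [hfstar_le (x k)]
        · exact min_le_left _ _
end
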